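/- arXiv:2510.23012 — 2 statements merged into one kernel-verified Lean document; each statement's English description precedes it below -/
import Mathlib

section
/- Let n ≥ 1 and λ > 0. For all x, y ∈ ℝⁿ, ‖σ_λ(x) − σ_λ(y)‖₂ ≤ (λ/2) ‖x − y‖₂, where ‖·‖₂ is the Euclidean norm. In particular the standard softmax σ₁ is (1/2)-Lipschitz in the Euclidean norm. -/
open scoped ENNReal BigOperators

/-- The softmax function with inverse temperature `lam`. -/
noncomputable def softmax {n : ℕ} (lam : ℝ) (x : Fin n → ℝ) : Fin n → ℝ :=
  fun i => Real.exp (lam * x i) / ∑ j, Real.exp (lam * x j)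

/-- The ℓ_p norm on `Fin n → ℝ`, for `p ∈ [1, ∞]`. -/
noncomputable def lpNorm {n : ℕ} (p : ℝ≥0∞) (x : Fin n → ℝ) : ℝ :=
  if p = ⊤ then ⨆ i, |x i| else (∑ i, |x i| ^ p.toReal) ^ (1 / p.toReal)

/-- The ℓ_p-induced operator norm of a matrix. -/
noncomputable def opNorm {n m : ℕ} (p : ℝ≥0∞) (A : Matrix (Fin n) (Fin m) ℝ) : ℝ :=
  ⨆ v : {v : Fin m → ℝ // v ≠ 0}, lpNorm p (A.mulVec v.val) / lpNorm p v.val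

/-- The matrix `Diag(s) - s sᵀ` (Jacobian of softmax with `lam = 1` at a point with value `s`). -/
noncomputable def softmaxJac {n : ℕ} (s : Fin n → ℝ) : Matrix (Fin n) (Fin n) ℝ :=
  Matrix.diagonal s - Matrix.vecMulVec s s

/-- The open (interior of the) probability simplex. -/
def openSimplex (n : ℕ) : Set (Fin n → ℝ) :=
  {u | (∀ i, 0 < u i) ∧ ∑ i, u i = 1}

/-- The (closed) probability simplex. -/
def probSimplex (n : ℕ) : Set (Fin n → ℝ) :=
  {u | (∀ i, 0 ≤ u i) ∧ ∑ i, u i = 1}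

/-! At `x`, the Jacobian of softmax is `lam • (diag s - s sᵀ)` with `s = softmax lam x` a
probability vector, so by the mean value inequality it suffices to bound the ℓ² operator norm
of `diag s - s sᵀ` by `1/2`. This matrix is symmetric, and the absolute sum of its `i`-th row is
`s i * ∑ j |δ i j - s j| = 2 s i (1 - s i) ≤ 1/2`; the Schur test
`‖A‖₂² ≤ (max row sum of |A|) * (max column sum of |A|)` concludes. -/

open scoped Matrix
open WithLp

lemma lpNorm_two_eq_norm {n : ℕ} (z : Fin n → ℝ) : lpNorm 2 z = ‖toLp 2 z‖ := by
  rw [lpNorm, if_neg ENNReal.ofNat_ne_top, EuclideanSpace.norm_eq, Real.sqrt_eq_rpow]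
  norm_num [Real.norm_eq_abs]

theorem Matrix.sum_sq_mulVec_le_of_sum_abs_le {m n : Type*} [Fintype m] [Fintype n]
    (A : Matrix m n ℝ) {R C : ℝ} (hR : 0 ≤ R) (hrow : ∀ i, ∑ j, |A i j| ≤ R)
    (hcol : ∀ j, ∑ i, |A i j| ≤ C) (v : n → ℝ) :
    ∑ i, (A *ᵥ v) i ^ 2 ≤ R * C * ∑ j, v j ^ 2 := by
  have hrow_sq : ∀ i, (A *ᵥ v) i ^ 2 ≤ R * ∑ j, |A i j| * v j ^ 2 := fun i =>
    calc (A *ᵥ v) i ^ 2 ≤ (∑ j, |A i j|) * ∑ j, |A i j| * v j ^ 2 :=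
          Finset.sum_sq_le_sum_mul_sum_of_sq_le_mul _ (fun j _ => abs_nonneg _)
            (fun j _ => by positivity)
            fun j _ => le_of_eq (by rw [mul_pow, ← sq_abs (A i j)]; ring)
      _ ≤ R * ∑ j, |A i j| * v j ^ 2 :=
          mul_le_mul_of_nonneg_right (hrow i) (by positivity)
  calc ∑ i, (A *ᵥ v) i ^ 2 ≤ ∑ i, R * ∑ j, |A i j| * v j ^ 2 :=
        Finset.sum_le_sum fun i _ => hrow_sq i
    _ = R * ∑ j, (∑ i, |A i j|) * v j ^ 2 := by
          rw [← Finset.mul_sum, Finset.sum_comm]; simp_rw [Finset.sum_mul]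
    _ ≤ R * ∑ j, C * v j ^ 2 := by
          gcongr with j; exact hcol j
    _ = R * C * ∑ j, v j ^ 2 := by rw [← Finset.mul_sum, mul_assoc]

theorem Matrix.norm_toEuclideanCLM_le_of_sum_abs_le {n : Type*} [Fintype n] [DecidableEq n]
    (A : Matrix n n ℝ) {R C : ℝ} (hR : 0 ≤ R) (hrow : ∀ i, ∑ j, |A i j| ≤ R)
    (hcol : ∀ j, ∑ i, |A i j| ≤ C) :
    ‖Matrix.toEuclideanCLM (𝕜 := ℝ) A‖ ≤ √(R * C) := by
  refine ContinuousLinearMap.opNorm_le_bound _ (Real.sqrt_nonneg _) fun v => ?_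
  simp only [EuclideanSpace.norm_eq, Matrix.ofLp_toEuclideanCLM, Real.norm_eq_abs, sq_abs]
  rw [← Real.sqrt_mul' _ (by positivity)]
  exact Real.sqrt_le_sqrt (A.sum_sq_mulVec_le_of_sum_abs_le hR hrow hcol _)

lemma softmaxJac_apply {n : ℕ} (s : Fin n → ℝ) (i j : Fin n) :
    softmaxJac s i j = s i * ((if i = j then 1 else 0) - s j) := by
  by_cases h : i = j <;> simp [softmaxJac, Matrix.vecMulVec_apply, h, mul_sub]

lemma softmaxJac_apply_comm {n : ℕ} (s : Fin n → ℝ) (i j : Fin n) :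
    softmaxJac s j i = softmaxJac s i j := by
  by_cases h : i = j
  · rw [h]
  · simp [softmaxJac_apply, h, Ne.symm h, mul_comm]

lemma sum_abs_softmaxJac_le {n : ℕ} {s : Fin n → ℝ} (hs : s ∈ probSimplex n) (i : Fin n) :
    ∑ j, |softmaxJac s i j| ≤ 1 / 2 := by
  obtain ⟨hs0, hs1⟩ := hs
  have hdist : ∑ j, |(if i = j then 1 else 0) - s j| = 2 * (1 - s i) := by
    have hle : s i ≤ 1 := hs1 ▸ Finset.single_le_sum (fun j _ => hs0 j) (Finset.mem_univ i)
    have hterm : ∀ j, |(if i = j then (1 : ℝ) else 0) - s j|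
        = s j + if i = j then 1 - 2 * s i else 0 := by
      intro j
      by_cases h : i = j
      · subst h; rw [if_pos rfl, if_pos rfl, abs_of_nonneg (sub_nonneg.2 hle)]; ring
      · simp [h, abs_of_nonneg (hs0 j)]
    simp only [hterm, Finset.sum_add_distrib, hs1, Finset.sum_ite_eq, Finset.mem_univ, if_true]
    ring
  calc ∑ j, |softmaxJac s i j| = s i * (2 * (1 - s i)) := by
        simp only [softmaxJac_apply, abs_mul, abs_of_nonneg (hs0 i), ← Finset.mul_sum, hdist]
    _ ≤ 1 / 2 := by nlinarith [sq_nonneg (s i - 1 / 2)]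

lemma norm_smul_toEuclideanCLM_softmaxJac_le {n : ℕ} {lam : ℝ} (hlam : 0 ≤ lam)
    {s : Fin n → ℝ} (hs : s ∈ probSimplex n) :
    ‖lam • Matrix.toEuclideanCLM (𝕜 := ℝ) (softmaxJac s)‖ ≤ lam / 2 := by
  have hcol : ∀ j, ∑ i, |softmaxJac s i j| ≤ 1 / 2 := fun j => by
    simpa only [softmaxJac_apply_comm] using sum_abs_softmaxJac_le hs j
  have hJ : ‖Matrix.toEuclideanCLM (𝕜 := ℝ) (softmaxJac s)‖ ≤ 1 / 2 :=
    calc ‖Matrix.toEuclideanCLM (𝕜 := ℝ) (softmaxJac s)‖ ≤ √(1 / 2 * (1 / 2)) :=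
          (softmaxJac s).norm_toEuclideanCLM_le_of_sum_abs_le (by norm_num)
            (sum_abs_softmaxJac_le hs) hcol
      _ = 1 / 2 := by rw [← sq, Real.sqrt_sq (by norm_num)]
  rw [norm_smul, Real.norm_of_nonneg hlam, div_eq_mul_one_div]
  exact mul_le_mul_of_nonneg_left hJ hlam

lemma softmax_mem_probSimplex {n : ℕ} [NeZero n] (lam : ℝ) (x : Fin n → ℝ) :
    softmax lam x ∈ probSimplex n := by
  refine ⟨fun i => by unfold softmax; positivity, ?_⟩
  have hS : 0 < ∑ j, Real.exp (lam * x j) :=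
    Finset.sum_pos (fun j _ => Real.exp_pos _) Finset.univ_nonempty
  simp only [softmax, ← Finset.sum_div, div_self hS.ne']

theorem hasFDerivAt_softmax {n : ℕ} (lam : ℝ) (x : EuclideanSpace ℝ (Fin n)) :
    HasFDerivAt (fun u : EuclideanSpace ℝ (Fin n) => toLp 2 (softmax lam (ofLp u)))
      (lam • Matrix.toEuclideanCLM (𝕜 := ℝ) (softmaxJac (softmax lam (ofLp x)))) x := by
  rw [← hasFDerivWithinAt_univ, hasFDerivWithinAt_piLp]
  intro i
  rw [hasFDerivWithinAt_univ]
  have hexp : ∀ j, HasFDerivAt (fun u : EuclideanSpace ℝ (Fin n) => Real.exp (lam * u j))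
      (Real.exp (lam * x j) • lam • PiLp.proj 2 (fun _ => ℝ) j) x := fun j =>
    ((PiLp.hasFDerivAt_apply 2 x j).const_mul lam).exp
  have hsum := HasFDerivAt.fun_sum (u := Finset.univ) fun j _ => hexp j
  have hpos : 0 < ∑ j, Real.exp (lam * x j) :=
    Finset.sum_pos (fun j _ => Real.exp_pos _) ⟨i, Finset.mem_univ i⟩
  have hquot := (hexp i).mul ((hasFDerivAt_inv hpos.ne').comp x hsum)
  simp only [softmax, div_eq_mul_inv]
  refine hquot.congr_fderiv ?_
  ext v
  simp only [Function.comp_apply, add_apply, smul_apply,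
    ContinuousLinearMap.comp_apply, sum_apply, PiLp.proj_apply, smul_eq_mul,
    map_sum, ContinuousLinearMap.toSpanSingleton_apply, mul_neg, Finset.sum_neg_distrib,
    Finset.mul_sum, ContinuousLinearMap.comp_smulₛₗ, Real.ringHom_apply,
    Matrix.ofLp_toEuclideanCLM, Matrix.mulVec, dotProduct, softmaxJac_apply, softmax,
    div_eq_mul_inv, mul_sub, mul_ite, mul_one, mul_zero, sub_mul, ite_mul, zero_mul,
    Finset.sum_sub_distrib, Finset.sum_ite_eq, Finset.mem_univ, if_true]
  rw [neg_add_eq_sub]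
  congr 1
  · ring
  · exact Finset.sum_congr rfl fun j _ => by ring

/-- softmax with inverse temperature lam is (lam/2)-Lipschitz in the Euclidean norm. -/
theorem softmax_lipschitz_l2 {n : ℕ} (hn : 1 ≤ n) (lam : ℝ) (hlam : 0 < lam)
    (x y : Fin n → ℝ) :
    lpNorm 2 (softmax lam x - softmax lam y) ≤ (lam / 2) * lpNorm 2 (x - y) := by
  have : NeZero n := ⟨by omega⟩
  have hmvt := convex_univ.norm_image_sub_le_of_norm_hasFDerivWithin_le
    (fun u _ => (hasFDerivAt_softmax lam u).hasFDerivWithinAt)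
    (fun u _ => norm_smul_toEuclideanCLM_softmaxJac_le hlam.le (softmax_mem_probSimplex lam _))
    (Set.mem_univ (toLp 2 y)) (Set.mem_univ (toLp 2 x))
  rwa [lpNorm_two_eq_norm, lpNorm_two_eq_norm, toLp_sub, toLp_sub]
end

section
/- Let n ≥ 1 and λ ∈ (0, 2]. Then the softmax map σ_λ is firmly nonexpansive with respect to the Euclidean structure: for all x, y ∈ ℝⁿ, ‖σ_λ(x) − σ_λ(y)‖₂² ≤ ⟨σ_λ(x) − σ_λ(y), x − y⟩. -/
open scoped ENNReal BigOperators

open Finset Real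

/-! Write `p = σ_λ x` and `q = σ_λ y`. Since `log p - log q = λ (x - y) + c` for a constant `c`,
which drops out against `∑ (p - q) = 0`, the quantity `λ ⟨p - q, x - y⟩` is the symmetrized
Kullback–Leibler divergence `∑ (p - q) (log p - log q)`. Termwise, the logarithmic mean is at most
the arithmetic mean, so this is at least `∑ 2 (p - q)² / (p + q)`; by Cauchy–Schwarz and
`∑ (p + q) = 2` that is at least `‖p - q‖₁²`, and for the zero-sum vector `p - q` we have
`‖p - q‖₁² ≥ 2 ‖p - q‖₂²`. Hence `2 ‖p - q‖₂² ≤ λ ⟨p - q, x - y⟩`, which suffices when `λ ≤ 2`. -/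

theorem two_mul_sq_le_mul_log_one_add_sub_log_one_sub {x : ℝ} (hx : |x| < 1) :
    2 * x ^ 2 ≤ x * (log (1 + x) - log (1 - x)) := by
  have hseries := (hasSum_log_sub_log_of_abs_lt_one hx).mul_left x
  calc 2 * x ^ 2 = x * (2 * (1 / (2 * ((0 : ℕ) : ℝ) + 1)) * x ^ (2 * 0 + 1)) := by
        norm_num; ring
    _ ≤ _ := le_hasSum hseries 0 fun k _ => by
        rw [show x * (2 * (1 / (2 * (k : ℝ) + 1)) * x ^ (2 * k + 1))
          = 2 / (2 * k + 1) * (x ^ (k + 1)) ^ 2 by ring]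
        positivity

theorem two_mul_sq_div_add_le_mul_log_sub_log {a b : ℝ} (ha : 0 < a) (hb : 0 < b) :
    2 * (a - b) ^ 2 / (a + b) ≤ (a - b) * (log a - log b) := by
  have hab : 0 < a + b := add_pos ha hb
  set x := (a - b) / (a + b) with hx
  have hx_abs : |x| < 1 := by
    rw [abs_div, abs_of_pos hab, div_lt_one hab, abs_sub_lt_iff]
    constructor <;> linarith
  have h_add : 1 + x = 2 * a / (a + b) := by rw [hx]; field_simp; ring
  have h_sub : 1 - x = 2 * b / (a + b) := by rw [hx]; field_simp; ring
  have hlog : log (1 + x) - log (1 - x) = log a - log b := by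
    rw [h_add, h_sub, ← log_div (by positivity) (by positivity), ← log_div ha.ne' hb.ne']
    congr 1
    field_simp
  calc 2 * (a - b) ^ 2 / (a + b) = (a + b) * (2 * x ^ 2) := by rw [hx]; field_simp
    _ ≤ (a + b) * (x * (log (1 + x) - log (1 - x))) :=
        mul_le_mul_of_nonneg_left (two_mul_sq_le_mul_log_one_add_sub_log_one_sub hx_abs) hab.le
    _ = (a - b) * (log a - log b) := by rw [hlog, hx]; field_simp

section ZeroSum

variable {ι : Type*} [Fintype ι] {d : ι → ℝ}

theorem two_mul_abs_le_sum_abs_of_sum_eq_zero (hd : ∑ i, d i = 0) (i : ι) :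
    2 * |d i| ≤ ∑ j, |d j| := by
  classical
  have h_rest : |d i| ≤ ∑ j ∈ univ.erase i, |d j| :=
    calc |d i| = |∑ j ∈ univ.erase i, d j| := by
          rw [sum_erase_eq_sub (mem_univ i), hd, zero_sub, abs_neg]
      _ ≤ _ := abs_sum_le_sum_abs _ _
  rw [sum_erase_eq_sub (mem_univ i)] at h_rest
  linarith

theorem two_mul_sum_sq_le_sq_sum_abs_of_sum_eq_zero (hd : ∑ i, d i = 0) :
    2 * ∑ i, d i ^ 2 ≤ (∑ i, |d i|) ^ 2 :=
  calc 2 * ∑ i, d i ^ 2 = ∑ i, |d i| * (2 * |d i|) := by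
        rw [mul_sum]; congr! 1 with i; rw [← sq_abs]; ring
    _ ≤ ∑ i, |d i| * ∑ j, |d j| := by
        gcongr with i; exact two_mul_abs_le_sum_abs_of_sum_eq_zero hd i
    _ = (∑ i, |d i|) ^ 2 := by rw [← sum_mul, sq]

end ZeroSum

theorem two_mul_sum_sq_sub_le_sum_sub_mul_log_sub_log {ι : Type*} [Fintype ι] {p q : ι → ℝ}
    (hp : ∀ i, 0 < p i) (hq : ∀ i, 0 < q i) (hp_sum : ∑ i, p i = 1) (hq_sum : ∑ i, q i = 1) :
    2 * ∑ i, (p i - q i) ^ 2 ≤ ∑ i, (p i - q i) * (log (p i) - log (q i)) := by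
  have h_zero : ∑ i, (p i - q i) = 0 := by rw [sum_sub_distrib, hp_sum, hq_sum, sub_self]
  have h_mass : ∑ i, (p i + q i) = 2 := by rw [sum_add_distrib, hp_sum, hq_sum]; norm_num
  calc 2 * ∑ i, (p i - q i) ^ 2 ≤ (∑ i, |p i - q i|) ^ 2 :=
        two_mul_sum_sq_le_sq_sum_abs_of_sum_eq_zero h_zero
    _ = 2 * ((∑ i, |p i - q i|) ^ 2 / ∑ i, (p i + q i)) := by rw [h_mass]; ring
    _ ≤ 2 * ∑ i, |p i - q i| ^ 2 / (p i + q i) := by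
        gcongr
        exact sq_sum_div_le_sum_sq_div _ _ fun i _ => add_pos (hp i) (hq i)
    _ = ∑ i, 2 * (p i - q i) ^ 2 / (p i + q i) := by
        rw [mul_sum]; congr! 1 with i; rw [sq_abs, mul_div_assoc]
    _ ≤ ∑ i, (p i - q i) * (log (p i) - log (q i)) :=
        sum_le_sum fun i _ => two_mul_sq_div_add_le_mul_log_sub_log (hp i) (hq i)

section Softmax

variable {n : ℕ} [Nonempty (Fin n)] (lam : ℝ) (x : Fin n → ℝ)

theorem sum_exp_mul_pos : 0 < ∑ j, exp (lam * x j) :=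
  sum_pos (fun _ _ => exp_pos _) univ_nonempty

theorem softmax_pos (i : Fin n) : 0 < softmax lam x i :=
  div_pos (exp_pos _) (sum_exp_mul_pos lam x)

theorem sum_softmax : ∑ i, softmax lam x i = 1 := by
  simp only [softmax]
  rw [← sum_div, div_self (sum_exp_mul_pos lam x).ne']

theorem log_softmax (i : Fin n) :
    log (softmax lam x i) = lam * x i - log (∑ j, exp (lam * x j)) := by
  rw [softmax, log_div (exp_pos _).ne' (sum_exp_mul_pos lam x).ne', log_exp]

theorem sum_sub_mul_log_softmax_sub_log_softmax (y : Fin n → ℝ) :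
    ∑ i, (softmax lam x i - softmax lam y i) * (log (softmax lam x i) - log (softmax lam y i)) =
      lam * ∑ i, (softmax lam x i - softmax lam y i) * (x i - y i) := by
  simp only [log_softmax]
  have h_zero : ∑ i, (softmax lam x i - softmax lam y i) = 0 := by
    rw [sum_sub_distrib, sum_softmax, sum_softmax, sub_self]
  set c := log (∑ j, exp (lam * x j)) - log (∑ j, exp (lam * y j))
  calc _ = ∑ i, (lam * ((softmax lam x i - softmax lam y i) * (x i - y i)) -
        c * (softmax lam x i - softmax lam y i)) := by congr! 1 with i; ring
    _ = _ := by rw [sum_sub_distrib, ← mul_sum, ← mul_sum, h_zero, mul_zero, sub_zero]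

end Softmax

theorem lpNorm_two_sq {n : ℕ} (v : Fin n → ℝ) : lpNorm 2 v ^ 2 = ∑ i, v i ^ 2 := by
  have h_nonneg : 0 ≤ ∑ i, v i ^ 2 := sum_nonneg fun _ _ => sq_nonneg _
  simp only [lpNorm, ENNReal.ofNat_ne_top, if_false, ENNReal.toReal_ofNat, rpow_two, sq_abs]
  rw [← rpow_natCast, ← rpow_mul h_nonneg]
  norm_num

/-- for lam ∈ (0, 2], softmax is firmly nonexpansive in the Euclidean structure. -/
theorem softmax_firmly_nonexpansive {n : ℕ} (hn : 1 ≤ n) (lam : ℝ)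
    (hlam : 0 < lam) (hlam2 : lam ≤ 2) (x y : Fin n → ℝ) :
    lpNorm 2 (softmax lam x - softmax lam y) ^ 2 ≤
      ∑ i, (softmax lam x i - softmax lam y i) * (x i - y i) := by
  have : Nonempty (Fin n) := Fin.pos_iff_nonempty.mp hn
  have h_kl := two_mul_sum_sq_sub_le_sum_sub_mul_log_sub_log (softmax_pos lam x)
    (softmax_pos lam y) (sum_softmax lam x) (sum_softmax lam y)
  rw [sum_sub_mul_log_softmax_sub_log_softmax] at h_kl
  have h_sq_nonneg : 0 ≤ ∑ i, (softmax lam x i - softmax lam y i) ^ 2 :=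
    sum_nonneg fun _ _ => sq_nonneg _
  have h_inner_nonneg : 0 ≤ ∑ i, (softmax lam x i - softmax lam y i) * (x i - y i) :=
    nonneg_of_mul_nonneg_right (h_sq_nonneg.trans (by linarith)) hlam
  rw [lpNorm_two_sq]
  simp only [Pi.sub_apply]
  linarith [mul_le_mul_of_nonneg_right hlam2 h_inner_nonneg]
end
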